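/- For the random period doubling substitution ϑ: a ↦ {ab, ba}, b ↦ {aa}, the bi-infinite repetition of the word aab is a periodic point in X_ϑ of prime period 3. -/

import Mathlib

open List

variable {A : Type*}

/-- Extension of a random substitution to words, by concatenation. -/
def substWord (θ : A → Set (List A)) : List A → Set (List A)
  | [] => {[]}
  | a :: u => {w | ∃ x ∈ θ a, ∃ y ∈ substWord θ u, w = x ++ y}

/-- The set of realisations of `θ^k` on a word. -/
def substPowWord (θ : A → Set (List A)) : ℕ → List A → Set (List A)
  | 0, u => {u}
  | (k+1), u => ⋃ v ∈ substPowWord θ k u, substWord θ v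

/-- The power `θ^k` as a random substitution. -/
def powSub (θ : A → Set (List A)) (k : ℕ) : A → Set (List A) :=
  fun a => substPowWord θ k [a]

/-- `θ` is a (finite range) random substitution: every letter has a nonempty
finite set of realisations, all of which are nonempty words. -/
def RandomSubstitution (θ : A → Set (List A)) : Prop :=
  ∀ a : A, (θ a).Nonempty ∧ (θ a).Finite ∧ ∀ w ∈ θ a, w ≠ []

/-- A word is `θ`-legal if it is a subword of a realisation of some power of
`θ` on some letter. -/
def IsLegal (θ : A → Set (List A)) (u : List A) : Prop :=
  ∃ k : ℕ, ∃ a : A, ∃ w ∈ substPowWord θ k [a], u <:+: w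

/-- `θ` has disjoint images. -/
def HasDisjointImages (θ : A → Set (List A)) : Prop :=
  ∀ u v : List A, IsLegal θ u → IsLegal θ v →
    (substWord θ u ∩ substWord θ v).Nonempty → u = v

/-- `θ` has constant length `ℓ`. -/
def ConstantLength (θ : A → Set (List A)) (ℓ : ℕ) : Prop :=
  ∀ a : A, ∀ w ∈ θ a, w.length = ℓ

/-- `θ` is compatible: abelianisations of realisations are well defined. -/
def Compatible [DecidableEq A] (θ : A → Set (List A)) : Prop :=
  ∀ a : A, ∀ u ∈ θ a, ∀ v ∈ θ a, ∀ b : A, u.count b = v.count b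

/-- `θ` is primitive. -/
def Primitive (θ : A → Set (List A)) : Prop :=
  ∃ k : ℕ, ∀ a b : A, ∃ w ∈ substPowWord θ k [a], b ∈ w

/-- The finite subword of a bi-infinite sequence starting at `i`, of length `n`. -/
def extract (x : ℤ → A) (i : ℤ) (n : ℕ) : List A :=
  (List.range n).map fun j => x (i + j)

/-- The RS-subshift of `θ`: bi-infinite sequences all of whose subwords are legal. -/
def Subshift (θ : A → Set (List A)) : Set (ℤ → A) :=
  {x | ∀ i : ℤ, ∀ n : ℕ, IsLegal θ (extract x i n)}

/-- `x` is a realisation-wise image of `y` under `θ`: there is a decomposition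
of `x` into consecutive inflation words, with a cut at the origin, the `n`-th
of which is a realisation of `θ` on `y n`. -/
def SeqImage (θ : A → Set (List A)) (y x : ℤ → A) : Prop :=
  ∃ c : ℤ → ℤ, c 0 = 0 ∧ (∀ n : ℤ, c n < c (n + 1)) ∧
    ∀ n : ℤ, extract x (c n) (c (n + 1) - c n).toNat ∈ θ (y n)

/-- `θ` is globally uniquely recognisable. -/
def GloballyUniquelyRecognisable (θ : A → Set (List A)) : Prop :=
  ∀ x ∈ Subshift θ, ∃! y : ℤ → A, y ∈ Subshift θ ∧
    ∃ k : ℕ, (∃ w ∈ θ (y 0), k < w.length) ∧ SeqImage θ y (fun n => x (n - k))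

/-- `x` has period `p` (as a natural number, acting on indices in `ℤ`). -/
def HasPeriod (x : ℤ → A) (p : ℕ) : Prop :=
  ∀ n : ℤ, x (n + p) = x n

/-- `x` is shift-periodic. -/
def IsPeriodic (x : ℤ → A) : Prop :=
  ∃ p : ℕ, 0 < p ∧ HasPeriod x p

/-- `p` is the prime (least) period of `x`. -/
def PrimePeriod (x : ℤ → A) (p : ℕ) : Prop :=
  0 < p ∧ HasPeriod x p ∧ ∀ q : ℕ, 0 < q → HasPeriod x q → p ≤ q

/-- `u` is a periodic block for `x`: up to shift, `x` is the bi-infinite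
repetition of `u`. -/
def PeriodicBlock (u : List A) (x : ℤ → A) : Prop :=
  u ≠ [] ∧ ∃ i : ℤ, ∀ n : ℤ, extract x (i + n * u.length) u.length = u

inductive Letter : Type
  | a : Letter
  | b : Letter
  deriving DecidableEq

/-- The random period doubling substitution `a ↦ {ab, ba}, b ↦ {aa}`. -/
def randPD : Letter → Set (List Letter) :=
  fun x => match x with
  | .a => {[Letter.a, Letter.b], [Letter.b, Letter.a]}
  | .b => {[Letter.a, Letter.a]}

/-- The bi-infinite repetition of the word `aab`. -/
def aabSeq : ℤ → Letter :=
  fun n => if n % 3 = 2 then Letter.b else Letter.a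

/-! Legality is inherited by subwords and by realisations, and a legal word `u` whose square
is a realisation of `u` itself has all its powers legal: `u^(2m)` is a realisation of `u^m`, so
every `u^(2^j)` is legal, and `u^m` is a prefix of `u^(2^m)`. For the random period doubling substitution `aba ↦ ab·aa·ba`
is such a square, and every subword of `(aab)^∞` sits inside a power of `aba`. -/

section Legal

variable {θ : A → Set (List A)} {u v x y : List A}

theorem append_mem_substWord (hx : x ∈ substWord θ u) (hy : y ∈ substWord θ v) :
    x ++ y ∈ substWord θ (u ++ v) := by
  induction u generalizing x with
  | nil =>
    obtain rfl : x = [] := hx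
    exact hy
  | cons c u ih =>
    obtain ⟨x₁, hx₁, x₂, hx₂, rfl⟩ := hx
    exact ⟨x₁, hx₁, x₂ ++ y, ih hx₂, List.append_assoc _ _ _⟩

theorem substWord_nonempty (hθ : ∀ c, (θ c).Nonempty) : ∀ u : List A, (substWord θ u).Nonempty
  | [] => ⟨[], rfl⟩
  | c :: u => by
    obtain ⟨x, hx⟩ := hθ c
    obtain ⟨y, hy⟩ := substWord_nonempty hθ u
    exact ⟨x ++ y, x, hx, y, hy, rfl⟩

theorem IsLegal.of_infix (hu : IsLegal θ u) (h : v <:+: u) : IsLegal θ v := by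
  obtain ⟨k, c, w, hw, huw⟩ := hu
  exact ⟨k, c, w, hw, h.trans huw⟩

theorem IsLegal.of_mem_substWord (hθ : ∀ c, (θ c).Nonempty) (hu : IsLegal θ u)
    (hv : v ∈ substWord θ u) : IsLegal θ v := by
  obtain ⟨k, c, w, hw, s, t, rfl⟩ := hu
  obtain ⟨x, hx⟩ := substWord_nonempty hθ s
  obtain ⟨y, hy⟩ := substWord_nonempty hθ t
  have hmem : x ++ v ++ y ∈ substWord θ (s ++ u ++ t) :=
    append_mem_substWord (append_mem_substWord hx hv) hy
  exact ⟨k + 1, c, x ++ v ++ y, Set.mem_biUnion hw hmem, x, y, rfl⟩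

theorem flatten_replicate_two_mul_mem_substWord (h : u ++ u ∈ substWord θ u) (m : ℕ) :
    (List.replicate (2 * m) u).flatten ∈ substWord θ (List.replicate m u).flatten := by
  induction m with
  | zero => exact rfl
  | succ m ih =>
    rw [Nat.mul_succ, List.replicate_add (2 * m) 2, List.replicate_add m 1, List.flatten_append,
      List.flatten_append]
    exact append_mem_substWord ih (by simpa using h)

theorem IsLegal.flatten_replicate (hθ : ∀ c, (θ c).Nonempty) (hu : IsLegal θ u)
    (h : u ++ u ∈ substWord θ u) (m : ℕ) : IsLegal θ (List.replicate m u).flatten := by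
  have hpow : ∀ j, IsLegal θ (List.replicate (2 ^ j) u).flatten := by
    intro j
    induction j with
    | zero => simpa using hu
    | succ j ih =>
      rw [pow_succ']
      exact ih.of_mem_substWord hθ (flatten_replicate_two_mul_mem_substWord h _)
  obtain ⟨d, hd⟩ := Nat.exists_eq_add_of_le (Nat.lt_two_pow_self (n := m)).le
  refine (hpow m).of_infix ?_
  rw [hd, List.replicate_add, List.flatten_append]
  exact (List.prefix_append _ _).isInfix

end Legal

section Periodic

variable {x : ℤ → A} {p : ℕ}

-- The coercion `ℕ → ℤ` inside `extract` elaborates as a monadic lift of `List.range n`.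
theorem extract_eq_map_range (x : ℤ → A) (i : ℤ) (n : ℕ) :
    extract x i n = (List.range n).map fun j : ℕ => x (i + j) := by
  simp [_root_.extract, ← List.map_eq_flatMap]

theorem extract_add (x : ℤ → A) (i : ℤ) (m n : ℕ) :
    extract x i (m + n) = extract x i m ++ extract x (i + m) n := by
  simp only [extract_eq_map_range, List.range_add, List.map_append, List.map_map]
  congr 1
  refine List.map_congr_left fun j _ => ?_
  simp only [Function.comp_apply, Nat.cast_add, add_assoc]

theorem HasPeriod.extract_add_int_mul (hx : HasPeriod x p) (i k : ℤ) (n : ℕ) :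
    extract x (i + k * p) n = extract x i n := by
  simp only [extract_eq_map_range]
  refine List.map_congr_left fun j _ => ?_
  rw [add_right_comm]
  exact Function.Periodic.int_mul hx k _

theorem HasPeriod.extract_mul (hx : HasPeriod x p) (i : ℤ) (m : ℕ) :
    extract x i (m * p) = (List.replicate m (extract x i p)).flatten := by
  induction m generalizing i with
  | zero => simp [extract_eq_map_range]
  | succ m ih =>
    have hshift : extract x (i + (m * p : ℕ)) p = extract x i p := by
      simpa using hx.extract_add_int_mul i m p
    rw [Nat.succ_mul, extract_add, ih, hshift, List.replicate_succ', List.flatten_append,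
      List.flatten_singleton]

theorem HasPeriod.extract_infix (hx : HasPeriod x p) (hp : 0 < p) (i j : ℤ) (n : ℕ) :
    extract x i n <:+: (List.replicate (n + 1) (extract x j p)).flatten := by
  obtain ⟨r, hr, hrp⟩ : ∃ r : ℕ, (r : ℤ) = (i - j) % p ∧ r < p :=
    have h₀ := Int.emod_nonneg (i - j) (b := p) (by omega)
    have h₁ := Int.emod_lt_of_pos (i - j) (b := p) (by omega)
    ⟨((i - j) % p).toNat, by omega, by omega⟩
  have hi : extract x i n = extract x (j + r) n := by
    rw [← hx.extract_add_int_mul (j + r) ((i - j) / p)]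
    congr 1
    linarith [Int.emod_add_mul_ediv (i - j) p]
  obtain ⟨s, hs⟩ := Nat.exists_eq_add_of_le (show r + n ≤ (n + 1) * p by nlinarith)
  rw [hi, ← hx.extract_mul, hs, add_assoc, extract_add, extract_add]
  exact List.infix_append' _ _ _

end Periodic

section RandomPeriodDoubling

open Letter

theorem randPD_nonempty : ∀ c, (randPD c).Nonempty
  | .a => ⟨[a, b], Or.inl rfl⟩
  | .b => ⟨[a, a], rfl⟩

theorem isLegal_aba : IsLegal randPD [a, b, a] := by
  have hab : [a, b] ∈ substPowWord randPD 1 [a] :=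
    Set.mem_biUnion (x := [a]) rfl ⟨[a, b], Or.inl rfl, [], rfl, rfl⟩
  have habaa : [a, b, a, a] ∈ substPowWord randPD 2 [a] :=
    Set.mem_biUnion hab ⟨[a, b], Or.inl rfl, [a, a], ⟨[a, a], rfl, [], rfl, rfl⟩, rfl⟩
  exact ⟨2, a, _, habaa, [], [a], rfl⟩

theorem aba_append_aba_mem_substWord : [a, b, a] ++ [a, b, a] ∈ substWord randPD [a, b, a] :=
  ⟨[a, b], Or.inl rfl, [a, a, b, a], ⟨[a, a], rfl, [b, a], ⟨[b, a], Or.inr rfl, [], rfl, rfl⟩, rfl⟩,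
    rfl⟩

theorem aabSeq_hasPeriod_three : HasPeriod aabSeq 3 := by
  intro n
  simp only [aabSeq, Nat.cast_ofNat, Int.add_emod_right]

theorem aabSeq_mem_subshift : aabSeq ∈ Subshift randPD := by
  intro i n
  have haba : extract aabSeq 1 3 = [a, b, a] := rfl
  refine (isLegal_aba.flatten_replicate randPD_nonempty aba_append_aba_mem_substWord
    (n + 1)).of_infix ?_
  rw [← haba]
  exact aabSeq_hasPeriod_three.extract_infix (by norm_num) i 1 n

theorem primePeriod_aabSeq : PrimePeriod aabSeq 3 := by
  refine ⟨by norm_num, aabSeq_hasPeriod_three, fun q hq hper => ?_⟩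
  by_contra! hlt
  interval_cases q
  · exact absurd (hper 1) (by decide)
  · exact absurd (hper 0) (by decide)

end RandomPeriodDoubling

/-- `(aab)^∞` lies in the random period doubling subshift and has
prime period `3`. -/
theorem aab_periodic_point : aabSeq ∈ Subshift randPD ∧ PrimePeriod aabSeq 3 :=
  ⟨aabSeq_mem_subshift, primePeriod_aabSeq⟩
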